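/- Let 𝔛 be a Bourgain–Delbaen space with constant C = sup_q ‖i_q‖, set M_q = span{d_γ : γ ∈ Δ_q}, and define c_γ* = 0 for γ ∈ Δ_0, c_γ* = e_γ* ∘ i_q ∘ r_q for γ ∈ Δ_{q+1}, and d_γ* = e_γ* − c_γ*. If the finite dimensional decomposition (M_q)_q of 𝔛 is shrinking (i.e., for every f ∈ 𝔛*, ‖f ∘ (I − P_{[0,q]})‖ → 0 as q → ∞, where P_{[0,q]} x = i_q(r_q(x))), then 𝔛* equals the closed linear span of (d_γ*)_{γ∈Γ}; in particular 𝔛* is C-isomorphic to ℓ1. -/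

import Mathlib

open scoped ENNReal
open Filter Topology

set_option maxHeartbeats 1000000
set_option synthInstance.maxHeartbeats 400000

noncomputable section

/-- `ℓ∞(Γ)`. -/
abbrev Linf (Γ : Type*) : Type _ := lp (fun _ : Γ => ℝ) ∞

namespace BD

variable {Γ : Type*}

/-- The evaluation map on `ℓ∞(Γ)`, as a linear map. -/
def evalLM (γ : Γ) : Linf Γ →ₗ[ℝ] ℝ where
  toFun f := f γ
  map_add' f g := by simp
  map_smul' c f := by simp

/-- The evaluation functional `e_γ^*` on `ℓ∞(Γ)`. -/
def evalL (γ : Γ) : Linf Γ →L[ℝ] ℝ :=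
  LinearMap.mkContinuous (evalLM γ) 1 fun f => by
    rw [one_mul]
    exact lp.norm_apply_le_norm ENNReal.top_ne_zero f γ

/-- The restriction map `ℓ∞(Γ) → ℓ∞(A)`, as a linear map. -/
def restrLM (A : Finset Γ) : Linf Γ →ₗ[ℝ] (↥A → ℝ) where
  toFun f γ := f γ.1
  map_add' f g := by ext γ; simp
  map_smul' c f := by ext γ; simp

/-- The restriction operator `r_A : ℓ∞(Γ) → ℓ∞(A)` for a finite set `A ⊆ Γ`. -/
def restrCLM (A : Finset Γ) : Linf Γ →L[ℝ] (↥A → ℝ) :=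
  LinearMap.mkContinuous (restrLM A) 1 fun f => by
    rw [one_mul]
    refine (pi_norm_le_iff_of_nonneg (norm_nonneg f)).2 fun γ => ?_
    exact lp.norm_apply_le_norm ENNReal.top_ne_zero f γ.1

/-- The data defining a Bourgain-Delbaen space: a strictly increasing sequence of
nonempty finite subsets of `Γ` covering `Γ`, together with a uniformly bounded compatible
sequence of extension operators. -/
structure System (Γ : Type*) where
  Γs : ℕ → Finset Γ
  strict : StrictMono Γs
  nonempty : ∀ q, (Γs q).Nonempty
  covers : ∀ γ : Γ, ∃ q, γ ∈ Γs q
  i : ∀ q, (↥(Γs q) → ℝ) →L[ℝ] Linf Γ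
  extension : ∀ q (x : ↥(Γs q) → ℝ) (γ : ↥(Γs q)), i q x γ.1 = x γ
  compat : ∀ p q, p < q → ∀ x : ↥(Γs p) → ℝ, i p x = i q (restrCLM (Γs q) (i p x))
  bdd : BddAbove (Set.range fun q => ‖i q‖)

/-- `C = sup_q ‖i_q‖`. -/
def System.C (S : System Γ) : ℝ := ⨆ q, ‖S.i q‖

/-- `Δ_0 = Γ_0`, `Δ_q = Γ_q \ Γ_{q-1}`. -/
def System.Δ (S : System Γ) : ℕ → Finset Γ := fun q =>
  letI := Classical.decEq Γ
  match q with
  | 0 => S.Γs 0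
  | q + 1 => S.Γs (q + 1) \ S.Γs q

/-- The unique `q` with `γ ∈ Δ_q`. -/
def System.rk (S : System Γ) (γ : Γ) : ℕ :=
  letI := Classical.decEq Γ
  Nat.find (S.covers γ)

/-- The vector `d_γ = i_q (e_γ)` for `γ ∈ Δ_q`. -/
def System.dvec (S : System Γ) (γ : Γ) : Linf Γ :=
  letI := Classical.decEq Γ
  S.i (S.rk γ) fun δ => if (δ : Γ) = γ then 1 else 0

/-- `M_q = span {d_γ : γ ∈ Δ_q}`. -/
def System.M (S : System Γ) (q : ℕ) : Submodule ℝ (Linf Γ) :=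
  Submodule.span ℝ (S.dvec '' (S.Δ q : Set Γ))

/-- The Bourgain-Delbaen space: the closed linear span of the `d_γ`'s in `ℓ∞(Γ)`. -/
def System.space (S : System Γ) : Submodule ℝ (Linf Γ) :=
  (Submodule.span ℝ (Set.range S.dvec)).topologicalClosure


section ShortcutInstances

noncomputable instance (priority := 10000) instLinfNACG (Γ : Type*) :
    NormedAddCommGroup (Linf Γ) := inferInstance

noncomputable instance (priority := 10000) instLinfNS (Γ : Type*) :
    NormedSpace ℝ (Linf Γ) := inferInstance

noncomputable instance (priority := 10000) instSpaceNACG (S : System Γ) :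
    NormedAddCommGroup ↥S.space := inferInstance

noncomputable instance (priority := 10000) instSpaceNS (S : System Γ) :
    NormedSpace ℝ ↥S.space := inferInstance

noncomputable instance (priority := 10000) instDualNACG (S : System Γ) :
    NormedAddCommGroup (↥S.space →L[ℝ] ℝ) := inferInstance

noncomputable instance (priority := 10000) instDualNS (S : System Γ) :
    NormedSpace ℝ (↥S.space →L[ℝ] ℝ) := inferInstance

end ShortcutInstances

lemma dvec_mem (S : System Γ) (γ : Γ) : S.dvec γ ∈ S.space :=
  Submodule.le_topologicalClosure _ (Submodule.subset_span ⟨γ, rfl⟩)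

end BD

namespace BD

variable {Γ : Type*}

/-- The evaluation functional `e_γ^*` restricted to the Bourgain–Delbaen space. -/
def evalS (S : System Γ) (γ : Γ) : ↥S.space →L[ℝ] ℝ :=
  (evalL γ).comp S.space.subtypeL

/-- The functional `e_γ^* ∘ i_p ∘ r_p` on the Bourgain–Delbaen space. -/
def cAt (S : System Γ) (p : ℕ) (γ : Γ) : ↥S.space →L[ℝ] ℝ :=
  ((evalL γ).comp ((S.i p).comp (restrCLM (S.Γs p)))).comp S.space.subtypeL

/-- `c_γ^* = 0` if `γ ∈ Δ_0`, and `c_γ^* = e_γ^* ∘ i_q ∘ r_q` if `γ ∈ Δ_{q+1}`. -/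
def cstar (S : System Γ) (γ : Γ) : ↥S.space →L[ℝ] ℝ :=
  if S.rk γ = 0 then 0 else cAt S (S.rk γ - 1) γ

/-- `d_γ^* = e_γ^* - c_γ^*`. -/
def dstar (S : System Γ) (γ : Γ) : ↥S.space →L[ℝ] ℝ :=
  evalS S γ - cstar S γ

end BD

namespace BD

variable {Γ : Type*}

noncomputable instance (priority := 10000) instDualSubNACG (S : System Γ)
    (p : Submodule ℝ (↥S.space →L[ℝ] ℝ)) : NormedAddCommGroup ↥p := inferInstance

noncomputable instance (priority := 10000) instDualSubNS (S : System Γ)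
    (p : Submodule ℝ (↥S.space →L[ℝ] ℝ)) : NormedSpace ℝ ↥p := inferInstance

/-- The closed linear span of the biorthogonal functionals `(d_γ^*)_{γ∈Γ}` in the dual of the
Bourgain–Delbaen space. -/
def dstarSpan (S : System Γ) : Submodule ℝ (↥S.space →L[ℝ] ℝ) :=
  (Submodule.span ℝ (Set.range (dstar S))).topologicalClosure

lemma i_restr_dvec (S : System Γ) (q : ℕ) (γ : Γ) :
    S.i q (restrCLM (S.Γs q) (S.dvec γ)) ∈ Submodule.span ℝ (Set.range S.dvec) := by
  classical
  rcases lt_trichotomy (S.rk γ) q with h | h | h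
  · have hc := (S.compat (S.rk γ) q h
      (letI := Classical.decEq Γ; fun δ => if (δ : Γ) = γ then 1 else 0)).symm
    have : S.i q (restrCLM (S.Γs q) (S.dvec γ)) = S.dvec γ := hc
    rw [this]
    exact Submodule.subset_span ⟨γ, rfl⟩
  · have hres : restrCLM (S.Γs q) (S.dvec γ) =
        (letI := Classical.decEq Γ; fun δ : ↥(S.Γs q) => if (δ : Γ) = γ then 1 else 0) := by
      funext δ
      have hδ : (δ : Γ) ∈ S.Γs (S.rk γ) := by rw [h]; exact δ.2
      have := S.extension (S.rk γ)
        (letI := Classical.decEq Γ; fun δ' => if (δ' : Γ) = γ then 1 else 0) ⟨δ.1, hδ⟩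
      exact this
    rw [hres]
    have : S.i q (letI := Classical.decEq Γ;
        fun δ : ↥(S.Γs q) => if (δ : Γ) = γ then 1 else 0) = S.dvec γ := by
      rw [System.dvec]; subst h; rfl
    rw [this]
    exact Submodule.subset_span ⟨γ, rfl⟩
  · have hres : restrCLM (S.Γs q) (S.dvec γ) = 0 := by
      funext δ
      have hδ : (δ : Γ) ∈ S.Γs (S.rk γ) := S.strict.monotone h.le δ.2
      have hext := S.extension (S.rk γ)
        (letI := Classical.decEq Γ; fun δ' => if (δ' : Γ) = γ then 1 else 0) ⟨δ.1, hδ⟩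
      have hne : (δ : Γ) ≠ γ := by
        intro he
        have hmem : γ ∈ S.Γs q := he ▸ δ.2
        have hle : S.rk γ ≤ q := Nat.find_le hmem
        exact absurd hle (not_le.mpr h)
      have : restrCLM (S.Γs q) (S.dvec γ) δ = S.dvec γ δ.1 := rfl
      rw [this]
      show S.dvec γ δ.1 = 0
      rw [System.dvec]
      rw [hext]
      simp [hne]
    rw [hres]
    rw [map_zero]
    exact Submodule.zero_mem _

lemma Pmem (S : System Γ) (q : ℕ) {x : Linf Γ} (hx : x ∈ S.space) :
    S.i q (restrCLM (S.Γs q) x) ∈ S.space := by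
  have hmaps : Set.MapsTo (fun y : Linf Γ => S.i q (restrCLM (S.Γs q) y))
      (Submodule.span ℝ (Set.range S.dvec) : Set (Linf Γ))
      (Submodule.span ℝ (Set.range S.dvec) : Set (Linf Γ)) := by
    intro y hy
    have hle : Submodule.span ℝ (Set.range S.dvec) ≤
        (Submodule.span ℝ (Set.range S.dvec)).comap
          (((S.i q).comp (restrCLM (S.Γs q))) : Linf Γ →ₗ[ℝ] Linf Γ) := by
      rw [Submodule.span_le]
      rintro _ ⟨γ, rfl⟩
      exact i_restr_dvec S q γ
    exact hle hy
  have hc : Continuous fun y : Linf Γ => S.i q (restrCLM (S.Γs q) y) :=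
    ((S.i q).comp (restrCLM (S.Γs q))).continuous
  have hx' : x ∈ closure (Submodule.span ℝ (Set.range S.dvec) : Set (Linf Γ)) := by
    rw [← Submodule.topologicalClosure_coe]
    exact hx
  have := map_mem_closure hc hx' hmaps
  rw [System.space, SetLike.mem_coe.symm, Submodule.topologicalClosure_coe]
  exact this

/-- The Bourgain–Delbaen projection `P_{[0,q]} = i_q ∘ r_q`, as an operator on the
Bourgain–Delbaen space. -/
def proj (S : System Γ) (q : ℕ) : ↥S.space →L[ℝ] ↥S.space :=
  ContinuousLinearMap.codRestrict
    (((S.i q).comp (restrCLM (S.Γs q))).comp S.space.subtypeL) S.space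
    fun x => Pmem S q x.2

end BD

/-
The functionals `f ∘ P_{[0,q]}` are finite combinations of the evaluations `e_γ^*`, `γ ∈ Γ_q`.
The evaluations and the `d_γ^*` span the same space, by induction on the level of `γ`, because
`c_γ^*` only involves evaluations at points of lower level; so shrinkingness makes the span of the
`d_γ^*` dense.

For the isomorphism with `ℓ₁`, enumerate `Γ = {γ₀, γ₁, …}` and map `b ∈ ℓ₁` to `∑ bₙ e_{γₙ}^*`,
an operator of norm at most `1`. Testing this functional against `i_q` of the signs of `b` on
`Γ_q`, a vector of norm at most `C`, gives `‖b‖ ≤ C ‖∑ bₙ e_{γₙ}^*‖` in the limit `q → ∞`. Hence the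
operator has closed range; the range contains every `e_γ^*`, so it is onto.
-/

namespace BD

variable {Γ : Type*} (S : System Γ)

lemma System.mem_Γs_rk (γ : Γ) : γ ∈ S.Γs (S.rk γ) := by
  classical
  exact Nat.find_spec (S.covers γ)

variable {S} in
lemma System.rk_le_of_mem {γ : Γ} {q : ℕ} (h : γ ∈ S.Γs q) : S.rk γ ≤ q := by
  classical
  exact Nat.find_le h

variable {S} in
lemma System.rk_eq_succ {γ : Γ} {q : ℕ} (h : γ ∈ S.Γs (q + 1)) (h' : γ ∉ S.Γs q) :
    S.rk γ = q + 1 := by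
  refine (S.rk_le_of_mem h).antisymm (Nat.succ_le_of_lt (lt_of_not_ge fun hle => h' ?_))
  exact S.strict.monotone hle (S.mem_Γs_rk γ)

-- The unit vector `e_γ` of `ℓ∞(A)` (zero when `γ ∉ A`), written as in `System.dvec` so that
-- `d_γ = i_q e_γ` holds by `rfl` when `γ ∈ Δ_q`.
def unitVec (A : Finset Γ) (γ : Γ) : ↥A → ℝ := fun δ =>
  letI := Classical.decEq Γ
  if (δ : Γ) = γ then 1 else 0

lemma sum_smul_unitVec (A : Finset Γ) (v : ↥A → ℝ) : ∑ η : ↥A, v η • unitVec A η = v := by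
  classical
  funext δ
  simp [unitVec, Finset.sum_apply]

lemma System.i_unitVec_rk {γ : Γ} {q : ℕ} (h : S.rk γ = q) :
    S.i q (unitVec (S.Γs q) γ) = S.dvec γ := by
  subst h
  rfl

lemma System.i_mem_span_dvec (q : ℕ) (v : ↥(S.Γs q) → ℝ) :
    S.i q v ∈ Submodule.span ℝ (Set.range S.dvec) := by
  induction q with
  | zero =>
    rw [← sum_smul_unitVec _ v, map_sum]
    refine Submodule.sum_mem _ fun η _ => ?_
    rw [map_smul, S.i_unitVec_rk (Nat.le_zero.mp (S.rk_le_of_mem η.2))]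
    exact Submodule.smul_mem _ _ (Submodule.subset_span ⟨η, rfl⟩)
  | succ q ih =>
    let v' : ↥(S.Γs q) → ℝ := fun δ => v ⟨δ, (S.strict q.lt_succ_self).subset δ.2⟩
    let w := v - restrCLM (S.Γs (q + 1)) (S.i q v')
    -- `w` vanishes on `Γ_q`, so `i_{q+1} w` is a combination of the `d_γ`, `γ ∈ Δ_{q+1}`
    have hw : ∀ η : ↥(S.Γs (q + 1)), (η : Γ) ∈ S.Γs q → w η = 0 := fun η hη =>
      sub_eq_zero.mpr (S.extension q v' ⟨η, hη⟩).symm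
    have hsplit : S.i (q + 1) v = S.i q v' + S.i (q + 1) w := by
      rw [map_sub, ← S.compat q (q + 1) q.lt_succ_self v', add_sub_cancel]
    rw [hsplit, ← sum_smul_unitVec _ w, map_sum]
    refine Submodule.add_mem _ (ih v') (Submodule.sum_mem _ fun η _ => ?_)
    by_cases hη : (η : Γ) ∈ S.Γs q
    · rw [hw η hη, zero_smul, map_zero]
      exact Submodule.zero_mem _
    · rw [map_smul, S.i_unitVec_rk (S.rk_eq_succ η.2 hη)]
      exact Submodule.smul_mem _ _ (Submodule.subset_span ⟨η, rfl⟩)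

lemma System.i_mem_space (q : ℕ) (v : ↥(S.Γs q) → ℝ) : S.i q v ∈ S.space :=
  Submodule.le_topologicalClosure _ (S.i_mem_span_dvec q v)

lemma System.norm_i_le_C (q : ℕ) : ‖S.i q‖ ≤ S.C :=
  le_ciSup S.bdd q

lemma System.C_nonneg : 0 ≤ S.C :=
  (norm_nonneg _).trans (S.norm_i_le_C 0)

lemma evalS_apply (γ : Γ) (x : ↥S.space) : evalS S γ x = (x : Linf Γ) γ := rfl

lemma norm_evalS_le (γ : Γ) : ‖evalS S γ‖ ≤ 1 :=
  ContinuousLinearMap.opNorm_le_bound _ zero_le_one fun x => by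
    rw [one_mul, evalS_apply, Submodule.coe_norm]
    exact lp.norm_apply_le_norm ENNReal.top_ne_zero _ γ

lemma comp_restr_mem_span_evalS (q : ℕ) (L : (↥(S.Γs q) → ℝ) →L[ℝ] ℝ) :
    (L.comp (restrCLM (S.Γs q))).comp S.space.subtypeL ∈
      Submodule.span ℝ (evalS S '' (S.Γs q : Set Γ)) := by
  have hsum : (L.comp (restrCLM (S.Γs q))).comp S.space.subtypeL =
      ∑ η : ↥(S.Γs q), L (unitVec (S.Γs q) η) • evalS S η := by
    ext x
    conv_lhs => rw [ContinuousLinearMap.comp_apply, ContinuousLinearMap.comp_apply,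
      ← sum_smul_unitVec _ (restrCLM (S.Γs q) _)]
    simp [evalS_apply, restrCLM, restrLM, mul_comm]
  rw [hsum]
  exact Submodule.sum_mem _ fun η _ =>
    Submodule.smul_mem _ _ (Submodule.subset_span ⟨η, η.2, rfl⟩)

lemma cAt_mem_span_evalS (q : ℕ) (γ : Γ) :
    cAt S q γ ∈ Submodule.span ℝ (evalS S '' (S.Γs q : Set Γ)) :=
  comp_restr_mem_span_evalS S q ((evalL γ).comp (S.i q))

lemma comp_proj_mem_span_evalS (f : ↥S.space →L[ℝ] ℝ) (q : ℕ) :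
    f.comp (proj S q) ∈ Submodule.span ℝ (evalS S '' (S.Γs q : Set Γ)) :=
  comp_restr_mem_span_evalS S q
    (f.comp ((S.i q).codRestrict S.space (S.i_mem_space q)))

lemma cstar_mem_span_evalS (γ : Γ) :
    cstar S γ ∈ Submodule.span ℝ (Set.range (evalS S)) := by
  unfold cstar
  split_ifs
  · exact Submodule.zero_mem _
  · exact Submodule.span_mono (Set.image_subset_range _ _) (cAt_mem_span_evalS S _ γ)

lemma span_evalS_Γs_le_span_dstar (q : ℕ) :
    Submodule.span ℝ (evalS S '' (S.Γs q : Set Γ)) ≤ Submodule.span ℝ (Set.range (dstar S)) := by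
  induction q with
  | zero =>
    rw [Submodule.span_le]
    rintro _ ⟨γ, hγ, rfl⟩
    have hc : cstar S γ = 0 := if_pos (Nat.le_zero.mp (S.rk_le_of_mem hγ))
    rw [← sub_zero (evalS S γ), ← hc]
    exact Submodule.subset_span ⟨γ, rfl⟩
  | succ q ih =>
    rw [Submodule.span_le]
    rintro _ ⟨γ, hγ, rfl⟩
    by_cases hγq : γ ∈ S.Γs q
    · exact ih (Submodule.subset_span ⟨γ, hγq, rfl⟩)
    · have hc : cstar S γ = cAt S q γ := by
        rw [cstar, S.rk_eq_succ hγ hγq, if_neg q.succ_ne_zero, Nat.add_sub_cancel]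
      have hdecomp : evalS S γ = dstar S γ + cAt S q γ := by
        rw [← hc, dstar, sub_add_cancel]
      rw [SetLike.mem_coe, hdecomp]
      exact Submodule.add_mem _ (Submodule.subset_span ⟨γ, rfl⟩) (ih (cAt_mem_span_evalS S q γ))

lemma span_range_dstar : Submodule.span ℝ (Set.range (dstar S)) =
    Submodule.span ℝ (Set.range (evalS S)) := by
  refine le_antisymm ?_ ?_
  · rw [Submodule.span_le]
    rintro _ ⟨γ, rfl⟩
    exact Submodule.sub_mem _ (Submodule.subset_span ⟨γ, rfl⟩) (cstar_mem_span_evalS S γ)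
  · rw [Submodule.span_le]
    rintro _ ⟨γ, rfl⟩
    exact span_evalS_Γs_le_span_dstar S (S.rk γ)
      (Submodule.subset_span ⟨γ, S.mem_Γs_rk γ, rfl⟩)

lemma mem_dstarSpan_of_tendsto (f : ↥S.space →L[ℝ] ℝ)
    (hf : Tendsto (fun q => ‖f.comp (ContinuousLinearMap.id ℝ ↥S.space - proj S q)‖)
      atTop (𝓝 0)) :
    f ∈ dstarSpan S := by
  have hlim : Tendsto (fun q => f.comp (proj S q)) atTop (𝓝 f) := by
    rw [tendsto_iff_norm_sub_tendsto_zero]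
    simpa [ContinuousLinearMap.comp_sub, norm_sub_rev] using hf
  rw [dstarSpan, ← SetLike.mem_coe, Submodule.topologicalClosure_coe, span_range_dstar]
  refine mem_closure_of_tendsto hlim (Eventually.of_forall fun q => ?_)
  exact Submodule.span_mono (Set.image_subset_range _ _) (comp_proj_mem_span_evalS S f q)

end BD

section OneSum

variable {ι E : Type*} [NormedAddCommGroup E] [NormedSpace ℝ E] [CompleteSpace E]

lemma lp.hasSum_norm_one (b : lp (fun _ : ι => ℝ) 1) : HasSum (fun n => ‖b n‖) ‖b‖ := by
  simpa using lp.hasSum_norm (p := 1) (by norm_num) b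

lemma lp.summable_smul (v : ι → E) (hv : ∀ n, ‖v n‖ ≤ 1)
    (b : lp (fun _ : ι => ℝ) 1) : Summable fun n => b n • v n :=
  (lp.hasSum_norm_one b).summable.of_norm_bounded fun n =>
    (norm_smul_le _ _).trans (mul_le_of_le_one_right (norm_nonneg _) (hv n))

def lp.oneSum (v : ι → E) (hv : ∀ n, ‖v n‖ ≤ 1) : lp (fun _ : ι => ℝ) 1 →L[ℝ] E :=
  LinearMap.mkContinuous
    { toFun b := ∑' n, b n • v n
      map_add' b c := by
        simp only [lp.coeFn_add, Pi.add_apply, add_smul]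
        exact (lp.summable_smul v hv b).tsum_add
          (lp.summable_smul v hv c)
      map_smul' a b := by
        simp only [lp.coeFn_smul, Pi.smul_apply, smul_eq_mul, mul_smul, RingHom.id_apply]
        exact (lp.summable_smul v hv b).tsum_const_smul a }
    1 fun b => by
      rw [one_mul]
      exact tsum_of_norm_bounded (lp.hasSum_norm_one b) fun n => (norm_smul_le _ _).trans (mul_le_of_le_one_right (norm_nonneg _) (hv n))


lemma lp.oneSum_apply (v : ι → E) (hv : ∀ n, ‖v n‖ ≤ 1) (b : lp (fun _ : ι => ℝ) 1) :
    lp.oneSum v hv b = ∑' n, b n • v n := rfl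

lemma lp.norm_oneSum_le (v : ι → E) (hv : ∀ n, ‖v n‖ ≤ 1) : ‖lp.oneSum v hv‖ ≤ 1 :=
  LinearMap.mkContinuous_norm_le _ zero_le_one _

lemma lp.oneSum_single [DecidableEq ι] (v : ι → E) (hv : ∀ n, ‖v n‖ ≤ 1) (n : ι) :
    lp.oneSum v hv (lp.single 1 n 1) = v n := by
  rw [lp.oneSum_apply, tsum_eq_single n fun m hm => by rw [lp.single_apply_ne 1 n 1 hm, zero_smul],
    lp.single_apply_self, one_smul]

end OneSum

lemma exists_continuousLinearEquiv_norm_mul_norm_symm_le {E F : Type*} [NormedAddCommGroup E]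
    [NormedSpace ℝ E] [CompleteSpace E] [NormedAddCommGroup F] [NormedSpace ℝ F]
    (R : E →L[ℝ] F) {C K : ℝ} (hC : 0 ≤ C) (hK : ‖R‖ ≤ K) (hR : ∀ x, ‖x‖ ≤ C * ‖R x‖)
    (hdense : DenseRange R) :
    ∃ T : F ≃L[ℝ] E, ‖(T : F →L[ℝ] E)‖ * ‖(T.symm : E →L[ℝ] F)‖ ≤ C * K := by
  have hanti : AntilipschitzWith C.toNNReal R :=
    R.antilipschitz_of_bound fun x => by rw [Real.coe_toNNReal _ hC]; exact hR x
  have hsurj : Function.Surjective R := by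
    rw [← Set.range_eq_univ, ← hdense.closure_range,
      (hanti.isClosed_range R.uniformContinuous).closure_eq]
  let L := LinearEquiv.ofBijective R.toLinearMap ⟨hanti.injective, hsurj⟩
  have hL_symm : ∀ y, ‖L.symm y‖ ≤ C * ‖y‖ := fun y => by
    have h := hR (L.symm y)
    rwa [show R (L.symm y) = y from L.apply_symm_apply y] at h
  let T := L.toContinuousLinearEquivOfBounds K C (fun x => R.le_of_opNorm_le hK x) hL_symm
  refine ⟨T.symm, mul_le_mul (T.symm.toContinuousLinearMap.opNorm_le_bound hC hL_symm) ?_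
    (norm_nonneg _) hC⟩
  exact T.toContinuousLinearMap.opNorm_le_bound ((norm_nonneg R).trans hK)
    fun x => R.le_of_opNorm_le hK x

namespace BD

variable {Γ : Type*} (S : System Γ)

lemma System.nonempty_equiv_nat (S : System Γ) : Nonempty (ℕ ≃ Γ) := by
  have : Countable Γ :=
    Function.Surjective.countable (f := fun p : Σ q, S.Γs q => (p.2 : Γ))
      fun γ => ⟨⟨_, γ, S.mem_Γs_rk γ⟩, rfl⟩
  have : Infinite Γ := by
    have : Infinite (Finset Γ) := Infinite.of_injective S.Γs S.strict.injective
    by_contra hfin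
    rw [not_infinite_iff_finite] at hfin
    exact not_finite (Finset Γ)
  obtain ⟨_⟩ := nonempty_denumerable Γ
  exact ⟨(Denumerable.eqv Γ).symm⟩

def evalSum (e : ℕ ≃ Γ) : lp (fun _ : ℕ => ℝ) 1 →L[ℝ] (↥S.space →L[ℝ] ℝ) :=
  lp.oneSum (fun n => evalS S (e n)) fun n => norm_evalS_le S (e n)

lemma hasSum_evalSum_apply (e : ℕ ≃ Γ) (b : lp (fun _ : ℕ => ℝ) 1) (x : ↥S.space) :
    HasSum (fun n => b n * (x : Linf Γ) (e n)) (evalSum S e b x) :=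
  ((lp.summable_smul _ (fun n => norm_evalS_le S (e n)) b).hasSum.mapL
    (ContinuousLinearMap.apply ℝ ℝ x) :)

lemma tendsto_tsum_indicator_not_mem_Γs (e : ℕ ≃ Γ) {a : ℕ → ℝ} (ha : Summable a) :
    Tendsto (fun q => ∑' n, {n | e n ∉ S.Γs q}.indicator a n) atTop (𝓝 0) := by
  have hlim : ∀ n, Tendsto (fun q => {n | e n ∉ S.Γs q}.indicator a n) atTop (𝓝 0) := fun n =>
    tendsto_const_nhds.congr' <| eventually_atTop.2 ⟨S.rk (e n), fun q hq =>
      (Set.indicator_of_notMem (not_not.2 (S.strict.monotone hq (S.mem_Γs_rk (e n)))) a).symm⟩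
  simpa using tendsto_tsum_of_dominated_convergence ha.norm hlim
    (Eventually.of_forall fun q n => norm_indicator_le_norm_self a n)

lemma norm_le_C_mul_norm_evalSum (e : ℕ ≃ Γ) (b : lp (fun _ : ℕ => ℝ) 1) :
    ‖b‖ ≤ S.C * ‖evalSum S e b‖ := by
  let tail q := ∑' n, {n | e n ∉ S.Γs q}.indicator (fun n => ‖b n‖) n
  have hq : ∀ q, ‖b‖ - (1 + S.C) * tail q ≤ S.C * ‖evalSum S e b‖ := by
    intro q
    let u : ↥(S.Γs q) → ℝ := fun δ => SignType.sign (b (e.symm δ))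
    let x : ↥S.space := ⟨S.i q u, S.i_mem_space q u⟩
    have hu : ‖u‖ ≤ 1 := (pi_norm_le_iff_of_nonneg zero_le_one).2 fun δ => by
      show ‖((SignType.sign (b (e.symm δ)) : SignType) : ℝ)‖ ≤ 1
      rcases SignType.sign (b (e.symm δ)) with _ | _ | _ <;> simp
    have hx : ‖x‖ ≤ S.C := calc
      ‖x‖ ≤ ‖S.i q‖ * ‖u‖ := (S.i q).le_opNorm u
      _ ≤ S.C * 1 := mul_le_mul (S.norm_i_le_C q) hu (norm_nonneg u) S.C_nonneg
      _ = S.C := mul_one _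
    have hpt : ∀ n, ‖b n‖ - (1 + S.C) * {n | e n ∉ S.Γs q}.indicator (fun n => ‖b n‖) n ≤
        b n * (x : Linf Γ) (e n) := by
      intro n
      by_cases hn : e n ∈ S.Γs q
      · have hxn : (x : Linf Γ) (e n) = SignType.sign (b n) := by
          simpa [u] using S.extension q u ⟨e n, hn⟩
        simp [hn, hxn, Real.norm_eq_abs]
      · have hxn : |(x : Linf Γ) (e n)| ≤ S.C :=
          (lp.norm_apply_le_norm ENNReal.top_ne_zero _ (e n)).trans hx
        have := neg_abs_le (b n * (x : Linf Γ) (e n))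
        rw [abs_mul] at this
        simp only [Set.indicator_of_mem (show n ∈ {n | e n ∉ S.Γs q} from hn),
          Real.norm_eq_abs]
        nlinarith [abs_nonneg (b n)]
    have hsum := (lp.hasSum_norm_one b).summable
    calc ‖b‖ - (1 + S.C) * tail q ≤ evalSum S e b x :=
          hasSum_le hpt ((lp.hasSum_norm_one b).sub
            (((hsum.indicator _).hasSum).mul_left (1 + S.C))) (hasSum_evalSum_apply S e b x)
      _ ≤ ‖evalSum S e b‖ * ‖x‖ := (le_abs_self _).trans ((evalSum S e b).le_opNorm x)
      _ ≤ S.C * ‖evalSum S e b‖ := by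
          rw [mul_comm]; exact mul_le_mul_of_nonneg_right hx (norm_nonneg _)
  have htail := tendsto_tsum_indicator_not_mem_Γs S e (lp.hasSum_norm_one b).summable
  exact le_of_tendsto'
    (by simpa only [mul_zero, sub_zero] using tendsto_const_nhds.sub (htail.const_mul (1 + S.C)))
    hq

lemma denseRange_evalSum (e : ℕ ≃ Γ) (htop : dstarSpan S = ⊤) : DenseRange (evalSum S e) := by
  have hspan : Submodule.span ℝ (Set.range (evalS S)) ≤
      LinearMap.range (evalSum S e).toLinearMap := by
    rw [Submodule.span_le]
    rintro _ ⟨γ, rfl⟩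
    refine ⟨lp.single 1 (e.symm γ) 1, ?_⟩
    have h := lp.oneSum_single (fun n => evalS S (e n)) (fun n => norm_evalS_le S (e n)) (e.symm γ)
    rw [e.apply_symm_apply] at h
    exact h
  rw [dstarSpan, span_range_dstar, ← Submodule.dense_iff_topologicalClosure_eq_top] at htop
  exact htop.mono fun f hf => hspan hf

end BD

/-- If the FDD `(M_q)_q` of a Bourgain–Delbaen space is shrinking (i.e. for
every `f` in the dual, `‖f ∘ (I - P_{[0,q]})‖ → 0`), then the dual equals the closed linear
span of the `(d_γ^*)_{γ∈Γ}`; in particular the dual is `C`-isomorphic to `ℓ1`. -/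
theorem statement7 {Γ : Type*} (S : BD.System Γ)
    (hshrinking : ∀ f : ↥S.space →L[ℝ] ℝ,
      Filter.Tendsto
        (fun q => ‖f.comp (ContinuousLinearMap.id ℝ ↥S.space - BD.proj S q)‖)
        Filter.atTop (nhds 0)) :
    BD.dstarSpan S = ⊤ ∧
    ∃ T : (↥S.space →L[ℝ] ℝ) ≃L[ℝ] lp (fun _ : ℕ => ℝ) 1,
      ‖(T : (↥S.space →L[ℝ] ℝ) →L[ℝ] lp (fun _ : ℕ => ℝ) 1)‖ *
        ‖(T.symm : lp (fun _ : ℕ => ℝ) 1 →L[ℝ] (↥S.space →L[ℝ] ℝ))‖ ≤ S.C := by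
  have htop : BD.dstarSpan S = ⊤ :=
    eq_top_iff.2 fun f _ => BD.mem_dstarSpan_of_tendsto S f (hshrinking f)
  refine ⟨htop, ?_⟩
  obtain ⟨e⟩ := S.nonempty_equiv_nat
  simpa only [mul_one] using exists_continuousLinearEquiv_norm_mul_norm_symm_le (BD.evalSum S e)
    S.C_nonneg (lp.norm_oneSum_le _ _) (BD.norm_le_C_mul_norm_evalSum S e)
    (BD.denseRange_evalSum S e htop)
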